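/- arXiv:1905.11665 — 4 statements merged into one kernel-verified Lean document; each statement's English description precedes it below -/
import Mathlib

section
/- If F is a field of characteristic not 2 that is not formally real (i.e., -1 is a sum of squares in F), then the Pythagoras number of F satisfies p(F) ≤ s(F) + 1, where s(F) is the level of F (the least number of squares summing to -1) and p(F) is the least p such that every sum of squares in F is a sum of p squares. -/
/-- **p(F) ≤ s(F) + 1 for non-formally-real fields.**
If `F` is a field of characteristic ≠ 2 and `s` is the level of `F` (the least
number of squares summing to `-1`, assumed finite), then every sum of squares
in `F` is a sum of `s + 1` squares; that is, `p(F) ≤ s(F) + 1`. -/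
theorem pythagoras_le_level_add_one (F : Type*) [Field F] (h2 : (2 : F) ≠ 0)
    (s : ℕ) (hs : ∃ g : Fin s → F, ∑ i, g i ^ 2 = -1)
    (hsmin : ∀ t < s, ¬ ∃ g : Fin t → F, ∑ i, g i ^ 2 = -1) :
    ∀ a : F, IsSumSq a → ∃ f : Fin (s + 1) → F, a = ∑ i, f i ^ 2 := by
  obtain ⟨g, hg⟩ := hs
  intro a _
  refine ⟨Fin.cons ((a + 1) / 2) (fun i => g i * ((a - 1) / 2)), ?_⟩
  rw [Fin.sum_univ_succ]
  simp only [Fin.cons_zero, Fin.cons_succ]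
  have h : ∑ i, (g i * ((a - 1) / 2)) ^ 2 = (∑ i, g i ^ 2) * ((a - 1) / 2) ^ 2 := by
    rw [Finset.sum_mul]
    simp [mul_pow]
  rw [h, hg]
  field_simp
  ring
end

section
/- A field F admits a field ordering (is formally real) if and only if -1 is not a sum of squares in F. -/
/-!
Sums of squares form a preordering as soon as `-1` is not one of them, and Zorn's lemma
enlarges it to a maximal preordering `P`. Maximality makes `P` total: if neither `a` nor `-a`
lies in `P`, then `P + aP` is a strictly larger preordering, because `-1 = p + aq` with `q ≠ 0`
would put `-a = (1 + p) q (q⁻¹)²` into `P`. Conversely, a positive cone contains every square,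
hence every sum of squares, so it cannot exclude `-1` if `-1` is a sum of squares.
-/

/-- A field ordering of `F`, presented by its positive cone `P`:
`P` is closed under addition and multiplication, every element or its negative
lies in `P`, and `-1 ∉ P`. This is equivalent to a linear order making `F` an
ordered field (with `a ≤ b ↔ b - a ∈ P`). -/
structure FieldOrdering (F : Type*) [Field F] where
  P : Set F
  add_mem : ∀ a ∈ P, ∀ b ∈ P, a + b ∈ P
  mul_mem : ∀ a ∈ P, ∀ b ∈ P, a * b ∈ P
  total : ∀ a : F, a ∈ P ∨ -a ∈ P
  neg_one_not_mem : (-1 : F) ∉ P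

namespace RingPreordering

section CommRing

variable {R : Type*} [CommRing R]

def sumSq (h : ¬ IsSumSq (-1 : R)) : RingPreordering R where
  toSubsemiring := Subsemiring.sumSq R
  mem_of_isSquare' hx := Subsemiring.mem_sumSq.2 hx.isSumSq
  neg_one_notMem' := by simpa using h

def sSupOfChain (c : Set (RingPreordering R)) (hc : IsChain (· ≤ ·) c) (hne : c.Nonempty) :
    RingPreordering R where
  toSubsemiring := sSup (toSubsemiring '' c)
  mem_of_isSquare' hx := by
    obtain ⟨P, hP⟩ := hne
    exact le_sSup (Set.mem_image_of_mem toSubsemiring hP) (P.mem_of_isSquare hx)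
  neg_one_notMem' := by
    change (-1 : R) ∉ sSup (toSubsemiring '' c)
    rw [Subsemiring.mem_sSup_of_directedOn (hne.image _)
      (hc.image_of_map_rel _ _ toSubsemiring fun _ _ => id).directedOn]
    rintro ⟨_, ⟨P, -, rfl⟩, hP⟩
    exact P.neg_one_notMem hP

theorem exists_isMax [Nonempty (RingPreordering R)] : ∃ P : RingPreordering R, IsMax P :=
  zorn_le_nonempty fun c hc hne =>
    ⟨sSupOfChain c hc hne, fun _ hP => le_sSup (Set.mem_image_of_mem toSubsemiring hP)⟩

end CommRing

section Field

variable {F : Type*} [Field F]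

def adjoin (P : RingPreordering F) {a : F} (ha : -a ∉ P) : RingPreordering F :=
  mk' {x | ∃ p ∈ P, ∃ q ∈ P, x = p + a * q}
    (by
      rintro _ _ ⟨p, hp, q, hq, rfl⟩ ⟨p', hp', q', hq', rfl⟩
      exact ⟨p + p', add_mem hp hp', q + q', add_mem hq hq', by ring⟩)
    (by
      rintro _ _ ⟨p, hp, q, hq, rfl⟩ ⟨p', hp', q', hq', rfl⟩
      refine ⟨p * p' + a * a * (q * q'), ?_, p * q' + q * p', ?_, by ring⟩
      · exact add_mem (mul_mem hp hp') (mul_mem (P.mul_self_mem a) (mul_mem hq hq'))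
      · exact add_mem (mul_mem hp hq') (mul_mem hq hp'))
    (fun x => ⟨x * x, P.mul_self_mem x, 0, zero_mem P, by ring⟩)
    (by
      rintro ⟨p, hp, q, hq, h⟩
      rcases eq_or_ne q 0 with rfl | hq0
      · exact P.neg_one_notMem (by simpa [h] using hp)
      · have h_neg_a : -a = (1 + p) * q * (q⁻¹ * q⁻¹) := by
          field_simp
          linear_combination h
        exact ha (h_neg_a ▸ mul_mem (mul_mem (add_mem (one_mem P) hp) hq) (P.mul_self_mem _)))

theorem le_adjoin (P : RingPreordering F) {a : F} (ha : -a ∉ P) : P ≤ adjoin P ha :=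
  fun x hx => ⟨x, hx, 0, zero_mem P, by ring⟩

theorem mem_adjoin (P : RingPreordering F) {a : F} (ha : -a ∉ P) : a ∈ adjoin P ha :=
  ⟨0, zero_mem P, 1, one_mem P, by ring⟩

theorem hasMemOrNegMem_of_isMax {P : RingPreordering F} (hP : IsMax P) : HasMemOrNegMem P where
  mem_or_neg_mem _ := or_iff_not_imp_right.2 fun ha => hP (le_adjoin P ha) (mem_adjoin P ha)

def toFieldOrdering (P : RingPreordering F) [HasMemOrNegMem P] : FieldOrdering F where
  P := P
  add_mem _ ha _ hb := add_mem ha hb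
  mul_mem _ ha _ hb := mul_mem ha hb
  total := HasMemOrNegMem.mem_or_neg_mem P
  neg_one_not_mem := P.neg_one_notMem

end Field

end RingPreordering

def FieldOrdering.toRingPreordering {F : Type*} [Field F] (O : FieldOrdering F) :
    RingPreordering F :=
  .mk' O.P (O.add_mem _ · _ ·) (O.mul_mem _ · _ ·)
    (fun x => (O.total x).elim (fun hx => O.mul_mem _ hx _ hx)
      fun hx => by simpa using O.mul_mem _ hx _ hx)
    O.neg_one_not_mem

/-- **Artin–Schreier.** A field `F` admits a field ordering (is formally real)
if and only if `-1` is not a sum of squares in `F`. -/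
theorem artin_schreier (F : Type*) [Field F] :
    Nonempty (FieldOrdering F) ↔ ¬ IsSumSq (-1 : F) := by
  refine ⟨fun ⟨O⟩ h => O.neg_one_not_mem (O.toRingPreordering.mem_of_isSumSq h), fun h => ?_⟩
  have : Nonempty (RingPreordering F) := ⟨.sumSq h⟩
  obtain ⟨P, hP⟩ := RingPreordering.exists_isMax (R := F)
  have := RingPreordering.hasMemOrNegMem_of_isMax hP
  exact ⟨P.toFieldOrdering⟩
end

section
/- If the level s(F) of a field F is finite, then s(F) is a power of 2. -/
/-- `SOS F n x` : `x` is a sum of `n` squares in `F`. -/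
private def SOS (F : Type*) [Field F] (n : ℕ) (x : F) : Prop :=
  ∃ g : Fin n → F, ∑ i, g i ^ 2 = x

private lemma sos_zero {F : Type*} [Field F] (n : ℕ) : SOS F n 0 :=
  ⟨0, by simp⟩

private lemma sos_sq {F : Type*} [Field F] {n : ℕ} {x : F} (h : SOS F n x) (r : F) :
    SOS F n (x * r ^ 2) := by
  obtain ⟨g, hg⟩ := h
  exact ⟨fun i => g i * r, by
    rw [← hg, Finset.sum_mul]; exact Finset.sum_congr rfl fun i _ => by ring⟩

private lemma sos_add {F : Type*} [Field F] {m n : ℕ} {a b : F}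
    (ha : SOS F m a) (hb : SOS F n b) : SOS F (m + n) (a + b) := by
  obtain ⟨g, hg⟩ := ha; obtain ⟨h, hh⟩ := hb
  refine ⟨Fin.append g h, ?_⟩
  rw [Fin.sum_univ_add]
  simp [Fin.append_left, Fin.append_right, hg, hh]

private lemma sos_split {F : Type*} [Field F] {m n : ℕ} {x : F} (h : SOS F (m + n) x) :
    ∃ a b, SOS F m a ∧ SOS F n b ∧ a + b = x := by
  obtain ⟨g, hg⟩ := h
  exact ⟨_, _, ⟨fun i => g (Fin.castAdd n i), rfl⟩, ⟨fun i => g (Fin.natAdd m i), rfl⟩,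
    by rw [← hg, Fin.sum_univ_add]⟩

private lemma sos_pad {F : Type*} [Field F] {m n : ℕ} {x : F} (h : SOS F m x) (hmn : m ≤ n) :
    SOS F n x := by
  obtain ⟨kk, rfl⟩ := Nat.exists_eq_add_of_le hmn
  have := sos_add h (sos_zero (F := F) kk)
  simpa using this

private lemma pf_identity {F : Type*} [Field F] {n : ℕ} (a b : F) (w t : Fin n → F) :
    (a + b) * (a * ∑ i, w i ^ 2 + b * ∑ i, t i ^ 2) =
      (∑ i, (a * w i + b * t i) ^ 2) + a * b * ∑ i, (w i - t i) ^ 2 := by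
  simp only [Finset.mul_sum, ← Finset.sum_add_distrib]
  exact Finset.sum_congr rfl fun i _ => by ring

/-- Pfister: sums of `2^k` squares are closed under multiplication. -/
private lemma sos_mul {F : Type*} [Field F] :
    ∀ (k : ℕ) (x z : F), SOS F (2 ^ k) x → SOS F (2 ^ k) z → SOS F (2 ^ k) (x * z) := by
  intro k
  induction k with
  | zero =>
    rintro x z ⟨g, hg⟩ ⟨h, hh⟩
    refine ⟨fun i => g i * h i, ?_⟩
    rw [← hg, ← hh]
    simp [Fin.sum_univ_one]
    ring
  | succ k ih =>
    intro x z hx hz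
    have h2 : 2 ^ (k + 1) = 2 ^ k + 2 ^ k := by rw [pow_succ, mul_two]
    rw [h2] at hx hz ⊢
    obtain ⟨a, b, ha, hb, hab⟩ := sos_split hx
    obtain ⟨c, d, hc, hd, hcd⟩ := sos_split hz
    by_cases ha0 : a = 0
    · have hxb : x = b := by rw [← hab, ha0, zero_add]
      have hxz : x * z = b * c + b * d := by rw [hxb, ← hcd]; ring
      rw [hxz]
      exact sos_add (ih _ _ hb hc) (ih _ _ hb hd)
    by_cases hb0 : b = 0
    · have hxa : x = a := by rw [← hab, hb0, add_zero]
      have hxz : x * z = a * c + a * d := by rw [hxa, ← hcd]; ring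
      rw [hxz]
      exact sos_add (ih _ _ ha hc) (ih _ _ ha hd)
    · have hc' : SOS F (2 ^ k) (c / a) := by
        have h1 := sos_sq (ih _ _ ha hc) a⁻¹
        have heq : a * c * a⁻¹ ^ 2 = c / a := by field_simp
        rwa [heq] at h1
      have hd' : SOS F (2 ^ k) (d / b) := by
        have h1 := sos_sq (ih _ _ hb hd) b⁻¹
        have heq : b * d * b⁻¹ ^ 2 = d / b := by field_simp
        rwa [heq] at h1
      obtain ⟨w', hw'⟩ := hc'
      obtain ⟨t', ht'⟩ := hd'
      have hca : a * (c / a) = c := by field_simp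
      have hdb : b * (d / b) = d := by field_simp
      have hkey : x * z =
          (∑ i, (a * w' i + b * t' i) ^ 2) + a * b * ∑ i, (w' i - t' i) ^ 2 := by
        rw [← pf_identity, hw', ht', hca, hdb, hab, hcd]
      rw [hkey]
      exact sos_add ⟨_, rfl⟩ (ih _ _ (ih _ _ ha hb) ⟨_, rfl⟩)

/-- **Pfister.** If the level `s` of a field `F` (the least number of squares
summing to `-1`) is finite, then `s` is a power of `2`. -/
theorem level_is_pow_two (F : Type*) [Field F]
    (s : ℕ) (hs : ∃ g : Fin s → F, ∑ i, g i ^ 2 = -1)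
    (hsmin : ∀ t < s, ¬ ∃ g : Fin t → F, ∑ i, g i ^ 2 = -1) :
    ∃ k : ℕ, s = 2 ^ k := by
  have hs0 : s ≠ 0 := by
    rintro rfl
    obtain ⟨g, hg⟩ := hs
    simp at hg
  set k := Nat.log 2 s with hk
  have hle : 2 ^ k ≤ s := Nat.pow_log_le_self 2 hs0
  refine ⟨k, le_antisymm ?_ hle⟩
  by_contra hlt
  push_neg at hlt
  have hup : s < 2 ^ (k + 1) := Nat.lt_pow_succ_log_self (by norm_num) s
  have h2 : 2 ^ (k + 1) = 2 ^ k + 2 ^ k := by rw [pow_succ, mul_two]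
  obtain ⟨m, hm⟩ : ∃ m, s = 2 ^ k + m := ⟨s - 2 ^ k, (Nat.add_sub_cancel' hle).symm⟩
  have hone : 1 ≤ 2 ^ k := Nat.one_le_two_pow
  have hm1 : m + 1 ≤ 2 ^ k := by omega
  have hsos : SOS F (2 ^ k + m) (-1) := by rw [← hm]; exact hs
  obtain ⟨a, b, ha, hb, hab⟩ := sos_split hsos
  have ha0 : a ≠ 0 := by
    rintro rfl
    rw [zero_add] at hab
    exact hsmin m (by omega) (hab ▸ hb)
  have h1b : SOS F (2 ^ k) (1 + b) := by
    have h1 : SOS F (1 + m) (1 + b) := sos_add ⟨fun _ => 1, by simp⟩ hb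
    exact sos_pad h1 (by omega)
  have hba : 1 + b = -a := by linear_combination hab
  have hfin0 : SOS F (2 ^ k) ((1 + b) * a * a⁻¹ ^ 2) :=
    sos_sq (sos_mul k _ _ h1b ha) a⁻¹
  have heq : (1 + b) * a * a⁻¹ ^ 2 = -1 := by
    rw [hba]; field_simp
  rw [heq] at hfin0
  exact hsmin (2 ^ k) hlt hfin0
end

section
/- Let F be a field of characteristic ≠ 2 admitting a discrete valuation v with residue field L. Then p(F) ≥ s(L) + 1, i.e., if the level of the residue field is at least m, then there is a sum of squares in F that is not a sum of m squares. -/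
/-!
If `a = ∑ fᵢ²` has a valuation that is not a square, divide by the entry `f_{i₀}` of largest
valuation: all `fᵢ / f_{i₀}` are integral, one of them is `1`, and `∑ (fᵢ / f_{i₀})²` has valuation
`< 1` (else `v a = v (f_{i₀})²`). Reducing modulo the maximal ideal writes `-1` as a sum of
`n - 1` squares in the residue field. So it suffices to produce a sum of squares of valuation
`v π` for a uniformizer `π`: lift `-1 = ∑ gᵢ²` to `c = 1 + ∑ uᵢ²` with `v c < 1`; either
`v c = v π`, or `v c < v π` and `(1 + π)² + ∑ uᵢ² = c + 2π + π²` has valuation `v π`.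
-/

open WithZero

lemma WithZero.isSquare_exp_iff {M : Type*} [AddMonoid M] {a : M} :
    IsSquare (exp a) ↔ Even a := by
  constructor
  · rintro ⟨x, hx⟩
    have hx0 : x ≠ 0 := by rintro rfl; simp at hx
    lift x to Multiplicative M using hx0
    exact ⟨x.toAdd, exp_injective hx⟩
  · rintro ⟨b, rfl⟩
    exact ⟨exp b, exp_add b b⟩

lemma WithZero.isGreatest_Iio_one_exp_neg_one : IsGreatest (Set.Iio (1 : ℤᵐ⁰)) (exp (-1)) := by
  refine ⟨(exp_lt_exp.mpr (by norm_num : (-1 : ℤ) < 0)).trans_eq exp_zero,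
    fun x (hx : x < 1) => ?_⟩
  rwa [← lt_mul_exp_iff_le exp_ne_zero, ← exp_add, neg_add_cancel, exp_zero]

namespace Valuation

variable {F Γ : Type*} [Field F] [LinearOrderedCommGroupWithZero Γ] (v : Valuation F Γ)

lemma residue_eq_zero_iff {x : v.valuationSubring} :
    IsLocalRing.residue v.valuationSubring x = 0 ↔ v x < 1 :=
  (IsLocalRing.residue_eq_zero_iff x).trans v.mem_maximalIdeal_iff

theorem exists_sum_sq_eq_neg_one_of_not_isSquare {n : ℕ} (f : Fin n → F)
    (hf : ¬ IsSquare (v (∑ i, f i ^ 2))) :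
    ∃ g : Fin (n - 1) → IsLocalRing.ResidueField v.valuationSubring, ∑ i, g i ^ 2 = -1 := by
  obtain _ | n := n
  · exact absurd ⟨0, by simp⟩ hf
  obtain ⟨i₀, hi₀⟩ := Finite.exists_max fun i => v (f i)
  have hi₀0 : f i₀ ≠ 0 := by
    rintro h
    have hf0 : ∀ i, f i = 0 := fun i => v.zero_iff.mp (le_zero_iff.mp (by simpa [h] using hi₀ i))
    exact hf ⟨0, by simp [hf0]⟩
  let G : Fin (n + 1) → v.valuationSubring := fun i =>
    ⟨f i / f i₀, by simpa [map_div₀, div_le_one₀ (v.pos_iff.mpr hi₀0)] using hi₀ i⟩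
  have hG₀ : G i₀ = 1 := Subtype.ext (div_self hi₀0)
  set S : v.valuationSubring := ∑ i, G i ^ 2
  have hsum : ∑ i, f i ^ 2 = f i₀ ^ 2 * S := by
    simp only [S, G, AddSubmonoidClass.coe_finsetSum, SubmonoidClass.coe_pow, div_pow,
      Finset.mul_sum, mul_div_cancel₀ _ (pow_ne_zero 2 hi₀0)]
  have hS : v S < 1 := by
    refine lt_of_le_of_ne S.2 fun h => hf ⟨v (f i₀), ?_⟩
    rw [hsum, map_mul, map_pow, h, mul_one, sq]
  have hres : ∑ i, IsLocalRing.residue v.valuationSubring (G i) ^ 2 = 0 := by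
    simpa [S] using (v.residue_eq_zero_iff (x := S)).mpr hS
  rw [Fin.sum_univ_succAbove _ i₀, hG₀, map_one, one_pow] at hres
  exact ⟨fun i => IsLocalRing.residue v.valuationSubring (G (i₀.succAbove i)),
    (neg_eq_of_add_eq_zero_right hres).symm⟩

theorem exists_isSumSq_valuation_eq
    (h2 : (2 : IsLocalRing.ResidueField v.valuationSubring) ≠ 0) {s : ℕ}
    {g : Fin s → IsLocalRing.ResidueField v.valuationSubring} (hg : ∑ i, g i ^ 2 = -1)
    {π : F} (hπ : IsGreatest (Set.Iio 1) (v π)) :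
    ∃ a : F, IsSumSq a ∧ v a = v π := by
  choose u hu using fun i => IsLocalRing.residue_surjective (R := v.valuationSubring) (g i)
  set c : v.valuationSubring := 1 + ∑ i, u i ^ 2
  have hc : (c : F) = 1 + ∑ i, (u i : F) ^ 2 := by push_cast [c]; rfl
  have hc1 : v c < 1 := v.residue_eq_zero_iff.mp (by simp [c, hu, hg])
  have hcπ : v c ≤ v π := hπ.2 hc1
  have hsq : IsSumSq (∑ i, (u i : F) ^ 2) := IsSumSq.sum_sq _ _
  rcases hcπ.eq_or_lt with hcπ | hcπ
  · exact ⟨c, hc ▸ IsSumSq.one.add hsq, hcπ⟩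
  refine ⟨(1 + π) ^ 2 + ∑ i, (u i : F) ^ 2, by rw [sq]; exact hsq.sq_add _, ?_⟩
  have hv2 : v (2 : F) = 1 := by
    have h2' : ¬ v ((2 : v.valuationSubring) : F) < 1 := fun h => h2 (by
      rw [← map_ofNat (IsLocalRing.residue _) 2]; exact v.residue_eq_zero_iff.mpr h)
    exact (2 : v.valuationSubring).2.antisymm (not_lt.mp h2')
  have hπ0 : 0 < v π := zero_le.trans_lt hcπ
  have hsmall : v (c + π ^ 2) < v (2 * π) := by
    rw [map_mul, hv2, one_mul]
    refine (v.map_add _ _).trans_lt (max_lt hcπ ?_)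
    rw [map_pow, sq]
    exact mul_lt_of_lt_one_right hπ0 hπ.1
  calc v ((1 + π) ^ 2 + ∑ i, (u i : F) ^ 2) = v (2 * π + (c + π ^ 2)) := by rw [hc]; ring_nf
    _ = v π := by rw [v.map_add_eq_of_lt_left hsmall, map_mul, hv2, one_mul]

end Valuation

theorem pythagoras_ge_level_residue_add_one_general (F : Type*) [Field F]
    (v : Valuation F (WithZero (Multiplicative ℤ))) (hv : Function.Surjective v)
    (m : ℕ)
    (h2 : (2 : IsLocalRing.ResidueField v.valuationSubring) ≠ 0)
    (hfin : ∃ n, ∃ g : Fin n → IsLocalRing.ResidueField v.valuationSubring,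
      ∑ i, g i ^ 2 = -1)
    (hlev : ¬ ∃ g : Fin (m - 1) → IsLocalRing.ResidueField v.valuationSubring,
      ∑ i, g i ^ 2 = -1) :
    ∃ a : F, IsSumSq a ∧ ¬ ∃ f : Fin m → F, a = ∑ i, f i ^ 2 := by
  obtain ⟨s, g, hg⟩ := hfin
  obtain ⟨π, hπ⟩ := hv (exp (-1))
  obtain ⟨a, ha, hva⟩ :=
    v.exists_isSumSq_valuation_eq h2 hg (hπ ▸ isGreatest_Iio_one_exp_neg_one)
  refine ⟨a, ha, ?_⟩
  rintro ⟨f, rfl⟩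
  refine hlev (v.exists_sum_sq_eq_neg_one_of_not_isSquare f ?_)
  rw [hva, hπ, isSquare_exp_iff]
  decide

/-- **Becher–Grimm–Van Geel.** Let `F` be a field with a discrete (surjective
`ℤ`-valued) valuation `v` whose residue field `L` has characteristic ≠ 2 and
finite level `≥ m` (i.e. `-1` is a sum of squares in `L` but not a sum of
`m - 1` squares). Then `p(F) ≥ m + 1`: there is a sum of squares in `F` that is
not a sum of `m` squares. -/
theorem pythagoras_ge_level_residue_add_one (F : Type*) [Field F]
    (v : Valuation F (WithZero (Multiplicative ℤ))) (hv : Function.Surjective v)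
    (m : ℕ) (hm : 1 ≤ m)
    (h2 : (2 : IsLocalRing.ResidueField v.valuationSubring) ≠ 0)
    (hfin : ∃ n, ∃ g : Fin n → IsLocalRing.ResidueField v.valuationSubring,
      ∑ i, g i ^ 2 = -1)
    (hlev : ¬ ∃ g : Fin (m - 1) → IsLocalRing.ResidueField v.valuationSubring,
      ∑ i, g i ^ 2 = -1) :
    ∃ a : F, IsSumSq a ∧ ¬ ∃ f : Fin m → F, a = ∑ i, f i ^ 2 :=
  pythagoras_ge_level_residue_add_one_general F v hv m h2 hfin hlev
end
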